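/- For all real numbers λ ≠ 0 and β > 0, the integral ∫_0^∞ λ β e^{−βt − λ e^{−βt}} / (1 − e^{−λ}) dt equals 1. -/

import Mathlib

/-! The density is `λ / (1 - e^{-λ})` times `β e^{-βt - λ e^{-βt}}`, the derivative of
`e^{-λ e^{-βt}} / λ`, which increases from `e^{-λ} / λ` at `t = 0` to `1 / λ` at infinity.
The second factor is nonnegative whatever the sign of `λ`, so the fundamental theorem of
calculus on `(0, ∞)` applies to it without a separate integrability argument. -/

open Real MeasureTheory Filter Topology

theorem hasDerivAt_exp_neg_mul_exp_neg_mul (lam β t : ℝ) :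
    HasDerivAt (fun t => exp (-(lam * exp (-(β * t)))))
      (lam * β * exp (-(β * t) - lam * exp (-(β * t)))) t := by
  have hlin : HasDerivAt (fun t : ℝ => -(β * t)) (-β) t := by
    simpa using ((hasDerivAt_id t).const_mul β).fun_neg
  convert ((hlin.exp.const_mul lam).fun_neg).exp using 1
  rw [sub_eq_add_neg, exp_add]
  ring

theorem tendsto_exp_neg_mul_exp_neg_mul_atTop (lam : ℝ) {β : ℝ} (hβ : 0 < β) :
    Tendsto (fun t => exp (-(lam * exp (-(β * t))))) atTop (𝓝 1) := by
  have hdecay : Tendsto (fun t : ℝ => exp (-(β * t))) atTop (𝓝 0) :=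
    tendsto_exp_atBot.comp (tendsto_neg_atBot_iff.mpr (tendsto_id.const_mul_atTop hβ))
  have hcont : Continuous (fun x : ℝ => exp (-(lam * x))) := by fun_prop
  simpa [Function.comp_def] using (hcont.tendsto 0).comp hdecay

theorem integral_Ioi_mul_exp_sub_mul_exp {lam β : ℝ} (hlam : lam ≠ 0) (hβ : 0 < β) :
    ∫ t in Set.Ioi (0:ℝ), β * exp (-(β * t) - lam * exp (-(β * t))) =
      (1 - exp (-lam)) / lam := by
  set G : ℝ → ℝ := fun t => exp (-(lam * exp (-(β * t)))) / lam
  have hderiv : ∀ t ∈ Set.Ioi (0:ℝ),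
      HasDerivAt G (β * exp (-(β * t) - lam * exp (-(β * t)))) t := fun t _ => by
    refine ((hasDerivAt_exp_neg_mul_exp_neg_mul lam β t).div_const lam).congr_deriv ?_
    field_simp
  have hcont : ContinuousWithinAt G (Set.Ici 0) 0 := by fun_prop
  have hnonneg : ∀ t ∈ Set.Ioi (0:ℝ), 0 ≤ β * exp (-(β * t) - lam * exp (-(β * t))) :=
    fun t _ => by positivity
  have hlim : Tendsto G atTop (𝓝 (1 / lam)) :=
    (tendsto_exp_neg_mul_exp_neg_mul_atTop lam hβ).div_const lam
  rw [integral_Ioi_of_hasDerivAt_of_nonneg hcont hderiv hnonneg hlim]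
  simp [G, sub_div]

theorem stmt_12 (lam β : ℝ) (hlam : lam ≠ 0) (hβ : 0 < β) :
    ∫ t in Set.Ioi (0:ℝ),
      lam * β * exp (-(β * t) - lam * exp (-(β * t))) / (1 - exp (-lam)) = 1 := by
  have hnorm : 1 - exp (-lam) ≠ 0 :=
    sub_ne_zero.mpr fun h => hlam (neg_eq_zero.mp (exp_eq_one_iff _ |>.mp h.symm))
  simp_rw [mul_assoc lam, mul_div_right_comm lam]
  rw [integral_const_mul, integral_Ioi_mul_exp_sub_mul_exp hlam hβ, div_mul_div_comm, mul_comm lam, div_self (mul_ne_zero hnorm hlam)]
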